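/- For all σ > 0, ρ > 0, and integers s, d with 1 ≤ s ≤ d, the following holds. Let f be the density on ℝ^d of d i.i.d. N(0,σ²) variables, i.e. f(y) = ∏_{j=1}^d φ_σ(y_j) where φ_σ is the N(0,σ²) density, and let g(y) = C(d,s)^{-1} Σ_{I} ∏_{j=1}^d φ_σ(y_j − σρ·1{j ∈ I}), the sum being over all subsets I of {1,…,d} of cardinality s and C(d,s) the binomial coefficient. Then ∫_{ℝ^d} g(y)²/f(y) dy − 1 ≤ (1 − s/d + (s/d)·e^{ρ²})^s − 1. -/

import Mathlib

/-!
Completing the square gives `φ_σ(t - a) φ_σ(t - b) / φ_σ(t) = e^{ab/σ²} φ_σ(t - a - b)`, so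
expanding `g²` turns `∫ g²/f` into `C(d,s)⁻² ∑_{I,J} λ^{|I ∩ J|}` with `λ = e^{ρ²}`. For fixed
`J`, write `λ^{|I ∩ J|} = ∑_{T ⊆ I ∩ J} (λ - 1)^{|T|}` and swap the sums: a set `T ⊆ J` with
`|T| = t` is contained in `C(d - t, s - t) ≤ C(d, s) (s/d)^t` of the `s`-sets `I`, so the inner
sum is at most `C(d, s) (1 + (s/d)(λ - 1))^s` by the binomial theorem.
-/

open MeasureTheory ProbabilityTheory Real
open scoped ENNReal NNReal BigOperators

noncomputable section

/-- The density of the one-dimensional normal distribution `N(0, σ²)`. -/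
def normalDensity (σ t : ℝ) : ℝ :=
  (Real.sqrt (2 * Real.pi * σ ^ 2))⁻¹ * Real.exp (-(t ^ 2) / (2 * σ ^ 2))

/-- The density `f` on `ℝ^d` of `d` i.i.d. `N(0,σ²)` variables. -/
def densF (d : ℕ) (σ : ℝ) (y : Fin d → ℝ) : ℝ :=
  ∏ j, normalDensity σ (y j)

/-- The density `g` on `ℝ^d` of the mixture, over a subset `I` of `{1,…,d}` of cardinality
`s` chosen uniformly at random, of the Gaussian measures `N(θ_I, σ² I_d)` where
`θ_I` has coordinates `σρ` on `I` and `0` elsewhere. -/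
def densG (d s : ℕ) (σ ρ : ℝ) (y : Fin d → ℝ) : ℝ :=
  ((d.choose s : ℝ))⁻¹ *
    ∑ I ∈ (Finset.univ : Finset (Fin d)).powersetCard s,
      ∏ j, normalDensity σ (y j - σ * ρ * (if j ∈ I then 1 else 0))

end

namespace Nat

theorem descFactorial_mul_pow_le {s n : ℕ} (h : s ≤ n) (t : ℕ) :
    s.descFactorial t * n ^ t ≤ n.descFactorial t * s ^ t := by
  induction t with
  | zero => simp
  | succ t ih =>
    have step : (s - t) * n ≤ (n - t) * s := by
      rw [Nat.sub_mul, Nat.sub_mul, mul_comm n s]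
      exact Nat.sub_le_sub_left (Nat.mul_le_mul_left t h) _
    calc s.descFactorial (t + 1) * n ^ (t + 1)
        = ((s - t) * n) * (s.descFactorial t * n ^ t) := by rw [descFactorial_succ]; ring
      _ ≤ ((n - t) * s) * (n.descFactorial t * s ^ t) := Nat.mul_le_mul step ih
      _ = n.descFactorial (t + 1) * s ^ (t + 1) := by rw [descFactorial_succ]; ring

/-- `C(n-t, s-t) / C(n, s) = C(s, t) / C(n, t)`, and `C(s, t) / C(n, t) ≤ (s/n)^t`. -/
theorem choose_sub_mul_pow_le {t s n : ℕ} (hts : t ≤ s) (hsn : s ≤ n) :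
    (n - t).choose (s - t) * n ^ t ≤ n.choose s * s ^ t := by
  refine Nat.le_of_mul_le_mul_right ?_ (descFactorial_pos.mpr (hts.trans hsn))
  calc (n - t).choose (s - t) * n ^ t * n.descFactorial t
      = t ! * (n.choose t * (n - t).choose (s - t)) * n ^ t := by
        rw [descFactorial_eq_factorial_mul_choose]; ring
    _ = n.choose s * (s.descFactorial t * n ^ t) := by
        rw [← choose_mul hts, descFactorial_eq_factorial_mul_choose]; ring
    _ ≤ n.choose s * (n.descFactorial t * s ^ t) :=
        Nat.mul_le_mul_left _ (descFactorial_mul_pow_le hsn t)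
    _ = n.choose s * s ^ t * n.descFactorial t := by ring

end Nat

namespace Finset

variable {α : Type*} [Fintype α] [DecidableEq α]

theorem card_filter_superset_le {s : ℕ} (hs : s ≤ Fintype.card α) {T : Finset α}
    (hT : #T ≤ s) :
    (#{I ∈ powersetCard s univ | T ⊆ I} : ℝ)
      ≤ (Fintype.card α).choose s * ((s : ℝ) / Fintype.card α) ^ #T := by
  rw [card_filter_powersetCard_subset T univ s (subset_univ T) hT, card_univ]
  rcases (Nat.zero_le (Fintype.card α)).eq_or_lt with hα | hα
  · have : IsEmpty α := Fintype.card_eq_zero_iff.mp hα.symm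
    simp [eq_empty_of_isEmpty T]
  have hpow : (0 : ℝ) < (Fintype.card α : ℝ) ^ #T := by positivity
  rw [div_pow, ← mul_div_assoc, le_div_iff₀ hpow]
  exact_mod_cast Nat.choose_sub_mul_pow_le hT hs

theorem sum_powersetCard_pow_card_inter_le {s : ℕ} (hs : s ≤ Fintype.card α) {J : Finset α}
    (hJ : #J ≤ s) {x : ℝ} (hx : 0 ≤ x) :
    ∑ I ∈ powersetCard s univ, (1 + x) ^ #(I ∩ J)
      ≤ (Fintype.card α).choose s * (1 + s / Fintype.card α * x) ^ #J := by
  have expand : ∀ I : Finset α,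
      (1 + x) ^ #(I ∩ J) = ∑ T ∈ J.powerset, if T ⊆ I then x ^ #T else 0 := by
    intro I
    have : {T ∈ J.powerset | T ⊆ I} = (I ∩ J).powerset := by
      ext T
      simp only [mem_filter, mem_powerset, subset_inter_iff]
      tauto
    rw [← sum_filter, this, add_comm, ← sum_pow_mul_eq_add_pow]
    simp
  calc ∑ I ∈ powersetCard s univ, (1 + x) ^ #(I ∩ J)
      = ∑ T ∈ J.powerset, (#{I ∈ powersetCard s univ | T ⊆ I} : ℝ) * x ^ #T := by
        simp_rw [expand]
        rw [sum_comm]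
        simp [sum_ite, sum_const]
    _ ≤ ∑ T ∈ J.powerset,
          (Fintype.card α).choose s * ((s : ℝ) / Fintype.card α) ^ #T * x ^ #T := by
        gcongr with T hT
        exact card_filter_superset_le hs ((card_le_card (mem_powerset.mp hT)).trans hJ)
    _ = (Fintype.card α).choose s * (1 + s / Fintype.card α * x) ^ #J := by
        simp_rw [mul_assoc, ← mul_pow, ← mul_sum]
        rw [add_comm, ← sum_pow_mul_eq_add_pow]
        simp

end Finset

section Gaussian

open Finset

theorem normalDensity_sub_eq_gaussianPDFReal (σ m t : ℝ) :
    normalDensity σ (t - m) = gaussianPDFReal m (σ ^ 2).toNNReal t := by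
  rw [normalDensity, gaussianPDFReal, Real.coe_toNNReal _ (sq_nonneg σ)]

theorem normalDensity_nonneg (σ t : ℝ) : 0 ≤ normalDensity σ t := by
  unfold normalDensity
  positivity

theorem normalDensity_pos {σ : ℝ} (hσ : σ ≠ 0) (t : ℝ) : 0 < normalDensity σ t := by
  have h := normalDensity_sub_eq_gaussianPDFReal σ 0 t
  rw [sub_zero] at h
  exact h ▸ gaussianPDFReal_pos 0 _ t (by simpa [Real.toNNReal_eq_zero, not_le] using hσ)

theorem normalDensity_mul_normalDensity_div {σ : ℝ} (hσ : σ ≠ 0) (a b t : ℝ) :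
    normalDensity σ (t - a) * normalDensity σ (t - b) / normalDensity σ t
      = exp (a * b / σ ^ 2) * normalDensity σ (t - (a + b)) := by
  rw [div_eq_iff (normalDensity_pos hσ t).ne']
  simp only [normalDensity]
  have hexp : -(t - a) ^ 2 / (2 * σ ^ 2) + -(t - b) ^ 2 / (2 * σ ^ 2)
      = a * b / σ ^ 2 + -(t - (a + b)) ^ 2 / (2 * σ ^ 2) + -t ^ 2 / (2 * σ ^ 2) := by
    field_simp
    ring
  calc _ = (√(2 * π * σ ^ 2))⁻¹ * (√(2 * π * σ ^ 2))⁻¹ *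
        exp (-(t - a) ^ 2 / (2 * σ ^ 2) + -(t - b) ^ 2 / (2 * σ ^ 2)) := by
        rw [exp_add]; ring
    _ = _ := by rw [hexp, exp_add, exp_add]; ring

variable {ι : Type*} [Fintype ι]

theorem prod_normalDensity_mul_prod_div {σ : ℝ} (hσ : σ ≠ 0) (u v y : ι → ℝ) :
    (∏ j, normalDensity σ (y j - u j)) * (∏ j, normalDensity σ (y j - v j))
        / ∏ j, normalDensity σ (y j)
      = exp ((∑ j, u j * v j) / σ ^ 2) * ∏ j, normalDensity σ (y j - (u j + v j)) := by
  rw [← prod_mul_distrib, ← prod_div_distrib, sum_div, exp_sum, ← prod_mul_distrib]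
  exact prod_congr rfl fun j _ => normalDensity_mul_normalDensity_div hσ (u j) (v j) (y j)

theorem integrable_prod_normalDensity_sub (σ : ℝ) (m : ι → ℝ) :
    Integrable (fun y : ι → ℝ => ∏ j, normalDensity σ (y j - m j)) := by
  simp_rw [normalDensity_sub_eq_gaussianPDFReal]
  exact Integrable.fintype_prod fun j => integrable_gaussianPDFReal (m j) _

theorem integral_prod_normalDensity_sub {σ : ℝ} (hσ : σ ≠ 0) (m : ι → ℝ) :
    ∫ y : ι → ℝ, ∏ j, normalDensity σ (y j - m j) = 1 := by
  have hv : (σ ^ 2).toNNReal ≠ 0 := by simpa [Real.toNNReal_eq_zero, not_le] using hσ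
  simp_rw [normalDensity_sub_eq_gaussianPDFReal, integral_fintype_prod_volume_eq_prod,
    integral_gaussianPDFReal_eq_one _ hv, prod_const_one]

end Gaussian

section ChiSquare

open Finset

theorem sum_shift_mul_shift {ι : Type*} [Fintype ι] [DecidableEq ι] {σ : ℝ} (hσ : σ ≠ 0)
    (ρ : ℝ) (I J : Finset ι) :
    (∑ j, (σ * ρ * if j ∈ I then 1 else 0) * (σ * ρ * if j ∈ J then 1 else 0)) / σ ^ 2
      = ρ ^ 2 * #(I ∩ J) := by
  have hterm : ∀ j, (σ * ρ * if j ∈ I then 1 else 0) * (σ * ρ * if j ∈ J then 1 else 0)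
      = σ ^ 2 * ρ ^ 2 * if j ∈ I ∩ J then 1 else 0 := by
    intro j
    by_cases hI : j ∈ I <;> by_cases hJ : j ∈ J <;>
      simp only [hI, hJ, mem_inter, and_self, and_false, false_and, if_true, if_false] <;> ring
  rw [sum_congr rfl fun j _ => hterm j, ← mul_sum, sum_boole, filter_mem_eq_inter, univ_inter]
  field_simp

variable {d s : ℕ} {σ : ℝ}

theorem densG_sq_div_densF (hσ : σ ≠ 0) (ρ : ℝ) (y : Fin d → ℝ) :
    densG d s σ ρ y ^ 2 / densF d σ y
      = (d.choose s : ℝ)⁻¹ ^ 2 * ∑ I ∈ powersetCard s univ, ∑ J ∈ powersetCard s univ,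
          exp (ρ ^ 2) ^ #(I ∩ J) * ∏ j, normalDensity σ
            (y j - (σ * ρ * (if j ∈ I then 1 else 0) + σ * ρ * (if j ∈ J then 1 else 0))) := by
  rw [densG, mul_pow, sq (∑ I ∈ _, _), sum_mul_sum, mul_div_assoc, sum_div]
  congr 1
  refine sum_congr rfl fun I _ => ?_
  rw [sum_div]
  refine sum_congr rfl fun J _ => ?_
  rw [densF, prod_normalDensity_mul_prod_div hσ (fun j => σ * ρ * if j ∈ I then 1 else 0)
    (fun j => σ * ρ * if j ∈ J then 1 else 0), sum_shift_mul_shift hσ, mul_comm (ρ ^ 2),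
    exp_nat_mul]

theorem integrable_densG_sq_div_densF (hσ : σ ≠ 0) (ρ : ℝ) :
    Integrable (fun y => densG d s σ ρ y ^ 2 / densF d σ y) := by
  simp_rw [densG_sq_div_densF hσ]
  exact .const_mul (integrable_finsetSum _ fun I _ => integrable_finsetSum _ fun J _ =>
    (integrable_prod_normalDensity_sub σ _).const_mul _) _

theorem integral_densG_sq_div_densF (hσ : σ ≠ 0) (ρ : ℝ) :
    ∫ y : Fin d → ℝ, densG d s σ ρ y ^ 2 / densF d σ y
      = (d.choose s : ℝ)⁻¹ ^ 2 *
          ∑ I ∈ powersetCard s (univ : Finset (Fin d)), ∑ J ∈ powersetCard s univ,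
            exp (ρ ^ 2) ^ #(I ∩ J) := by
  simp_rw [densG_sq_div_densF hσ]
  rw [integral_const_mul, integral_finsetSum _ fun I _ => integrable_finsetSum _ fun J _ =>
    (integrable_prod_normalDensity_sub σ _).const_mul _]
  congr 1
  refine sum_congr rfl fun I _ => ?_
  rw [integral_finsetSum _ fun J _ => (integrable_prod_normalDensity_sub σ _).const_mul _]
  refine sum_congr rfl fun J _ => ?_
  rw [integral_const_mul, integral_prod_normalDensity_sub hσ, mul_one]

theorem sum_exp_sq_pow_card_inter_le (hsd : s ≤ d) (ρ : ℝ) {J : Finset (Fin d)}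
    (hJ : #J = s) :
    ∑ I ∈ powersetCard s univ, exp (ρ ^ 2) ^ #(I ∩ J)
      ≤ d.choose s * (1 - (s : ℝ) / d + s / d * exp (ρ ^ 2)) ^ s := by
  have h := sum_powersetCard_pow_card_inter_le (by simpa using hsd) hJ.le
    (sub_nonneg.mpr (one_le_exp (sq_nonneg ρ)))
  simp only [add_sub_cancel, Fintype.card_fin, hJ] at h
  convert h using 2
  ring

end ChiSquare

theorem chi_square_divergence_bound_general (s d : ℕ) (hsd : s ≤ d)
    (σ ρ : ℝ) (hσ : 0 < σ) :
    (∫⁻ y : Fin d → ℝ, ENNReal.ofReal ((densG d s σ ρ y) ^ 2 / densF d σ y))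
      ≤ ENNReal.ofReal
          ((1 - (s : ℝ) / (d : ℝ) + ((s : ℝ) / (d : ℝ)) * Real.exp (ρ ^ 2)) ^ s) := by
  have hnonneg : ∀ y, 0 ≤ densG d s σ ρ y ^ 2 / densF d σ y := fun y =>
    div_nonneg (sq_nonneg _) (Finset.prod_nonneg fun j _ => normalDensity_nonneg σ _)
  rw [← ofReal_integral_eq_lintegral_ofReal (integrable_densG_sq_div_densF hσ.ne' ρ)
    (ae_of_all _ hnonneg), integral_densG_sq_div_densF hσ.ne']
  refine ENNReal.ofReal_le_ofReal ?_
  have hC : (d.choose s : ℝ) ≠ 0 := by exact_mod_cast (Nat.choose_pos hsd).ne'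
  calc _ ≤ (d.choose s : ℝ)⁻¹ ^ 2 * ∑ J ∈ (Finset.univ : Finset (Fin d)).powersetCard s,
          d.choose s * (1 - (s : ℝ) / d + s / d * exp (ρ ^ 2)) ^ s := by
        rw [Finset.sum_comm]
        gcongr with J hJ
        exact sum_exp_sq_pow_card_inter_le hsd ρ (Finset.mem_powersetCard.mp hJ).2
    _ = _ := by
        rw [Finset.sum_const, Finset.card_powersetCard, Finset.card_univ, Fintype.card_fin,
          nsmul_eq_mul]
        field_simp

/-- Lemma 7.1 (chi-square divergence bound): for all `σ, ρ > 0` and `1 ≤ s ≤ d`,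
`∫ g²/f − 1 ≤ (1 − s/d + (s/d) e^{ρ²})^s − 1`, stated equivalently (adding `1` to both
sides) as `∫ g²/f ≤ (1 − s/d + (s/d) e^{ρ²})^s`, with the integral over `ℝ^d` taken in
the Lebesgue sense to avoid integrability caveats. -/
theorem chi_square_divergence_bound (s d : ℕ) (hs : 1 ≤ s) (hsd : s ≤ d)
    (σ ρ : ℝ) (hσ : 0 < σ) (hρ : 0 < ρ) :
    (∫⁻ y : Fin d → ℝ, ENNReal.ofReal ((densG d s σ ρ y) ^ 2 / densF d σ y))
      ≤ ENNReal.ofReal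
          ((1 - (s : ℝ) / (d : ℝ) + ((s : ℝ) / (d : ℝ)) * Real.exp (ρ ^ 2)) ^ s) :=
  chi_square_divergence_bound_general s d hsd σ ρ hσ
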